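/- (Upper bound for encoder features) Let Y → X → Z1 → Z2 → R be a Markov chain of discrete random variables on finite spaces. Then I(Y;Z1) ≤ I(Y;Z2) − I(Z1;Z2) + H(Z1). -/
import Mathlib


open Real BigOperators

variable {Ω : Type*} [Fintype Ω]

/-- Distribution (pmf) of a discrete random variable `f` on a finite
probability space with weights `p`. -/
noncomputable def pdist {α : Type*} [Fintype α] [DecidableEq α]
    (p : Ω → ℝ) (f : Ω → α) (a : α) : ℝ :=
  ∑ ω, if f ω = a then p ω else 0

/-- Shannon entropy of a discrete random variable. -/
noncomputable def ent {α : Type*} [Fintype α] [DecidableEq α]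
    (p : Ω → ℝ) (f : Ω → α) : ℝ :=
  -∑ a, pdist p f a * Real.log (pdist p f a)

/-- Mutual information `I(f;g) = H(f) + H(g) - H(f,g)`. -/
noncomputable def mi {α β : Type*} [Fintype α] [DecidableEq α] [Fintype β] [DecidableEq β]
    (p : Ω → ℝ) (f : Ω → α) (g : Ω → β) : ℝ :=
  ent p f + ent p g - ent p (fun ω => (f ω, g ω))

/-- Conditional entropy `H(f | g) = H(f,g) - H(g)`. -/
noncomputable def condEnt {α β : Type*} [Fintype α] [DecidableEq α] [Fintype β] [DecidableEq β]
    (p : Ω → ℝ) (f : Ω → α) (g : Ω → β) : ℝ :=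
  ent p (fun ω => (f ω, g ω)) - ent p g

/-- Conditional mutual information `I(f;g | c) = H(f|c) - H(f|g,c)`. -/
noncomputable def condMI {α β γ : Type*} [Fintype α] [DecidableEq α] [Fintype β] [DecidableEq β]
    [Fintype γ] [DecidableEq γ]
    (p : Ω → ℝ) (f : Ω → α) (g : Ω → β) (c : Ω → γ) : ℝ :=
  condEnt p f c - condEnt p f (fun ω => (g ω, c ω))

/-- `A` and `C` are conditionally independent given `B`:
`P(a,c,b) ⬝ P(b) = P(a,b) ⬝ P(c,b)` for all values. -/
def CondIndep {α β γ : Type*} [Fintype α] [DecidableEq α] [Fintype β] [DecidableEq β]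
    [Fintype γ] [DecidableEq γ]
    (p : Ω → ℝ) (A : Ω → α) (C : Ω → γ) (B : Ω → β) : Prop :=
  ∀ a c b, pdist p (fun ω => (A ω, C ω, B ω)) (a, c, b) * pdist p B b =
    pdist p (fun ω => (A ω, B ω)) (a, b) * pdist p (fun ω => (C ω, B ω)) (c, b)

section helpers
variable {α β γ δ : Type*} [Fintype α] [DecidableEq α] [Fintype β] [DecidableEq β]
  [Fintype γ] [DecidableEq γ] [Fintype δ] [DecidableEq δ]
variable {p : Ω → ℝ}

lemma pdist_nonneg (hp0 : ∀ ω, 0 ≤ p ω) (f : Ω → α) (a : α) : 0 ≤ pdist p f a :=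
  Finset.sum_nonneg fun ω _ => by by_cases h : f ω = a <;> simp [h, hp0 ω]

lemma pdist_map (f : Ω → α) (g : α → β) (b : β) :
    pdist p (fun ω => g (f ω)) b = ∑ a, if g a = b then pdist p f a else 0 := by
  unfold pdist
  have h : ∀ a : α, (if g a = b then ∑ ω, if f ω = a then p ω else 0 else 0)
      = ∑ ω, if f ω = a then (if g a = b then p ω else 0) else 0 := by
    intro a; split <;> simp
  rw [Finset.sum_congr rfl fun a _ => h a, Finset.sum_comm]
  refine Finset.sum_congr rfl fun ω _ => ?_
  rw [Finset.sum_ite_eq Finset.univ (f ω) (fun a => if g a = b then p ω else 0)]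
  simp
end helpers
section helpers2
variable {α β γ δ : Type*} [Fintype α] [DecidableEq α] [Fintype β] [DecidableEq β]
  [Fintype γ] [DecidableEq γ] [Fintype δ] [DecidableEq δ]
variable {p : Ω → ℝ}

lemma pdist_le_pdist (hp0 : ∀ ω, 0 ≤ p ω) (f : Ω → α) (g : Ω → β) (a : α) (b : β)
    (h : ∀ ω, f ω = a → g ω = b) : pdist p f a ≤ pdist p g b := by
  refine Finset.sum_le_sum fun ω _ => ?_
  by_cases hf : f ω = a
  · simp [hf, h ω hf]
  · simp only [hf, if_false]
    by_cases hg : g ω = b <;> simp [hg, hp0 ω]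

lemma pdist_marg₁ (A : Ω → α) (C : Ω → γ) (B : Ω → β) (a : α) (b : β) :
    ∑ c, pdist p (fun ω => (A ω, C ω, B ω)) (a, c, b)
      = pdist p (fun ω => (A ω, B ω)) (a, b) := by
  unfold pdist
  rw [Finset.sum_comm]
  refine Finset.sum_congr rfl fun ω _ => ?_
  by_cases hA : A ω = a <;> by_cases hB : B ω = b <;>
    simp [Prod.ext_iff, hA, hB, Finset.sum_ite_eq]

lemma pdist_marg₂ (A : Ω → α) (C : Ω → γ) (B : Ω → β) (c : γ) (b : β) :
    ∑ a, pdist p (fun ω => (A ω, C ω, B ω)) (a, c, b)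
      = pdist p (fun ω => (C ω, B ω)) (c, b) := by
  unfold pdist
  rw [Finset.sum_comm]
  refine Finset.sum_congr rfl fun ω _ => ?_
  by_cases hC : C ω = c <;> by_cases hB : B ω = b <;>
    simp [Prod.ext_iff, hC, hB, Finset.sum_ite_eq]

lemma pdist_marg₃ (A : Ω → α) (C : Ω → γ) (B : Ω → β) (b : β) :
    ∑ a, ∑ c, pdist p (fun ω => (A ω, C ω, B ω)) (a, c, b) = pdist p B b := by
  have h1 : ∀ a : α, ∑ c, pdist p (fun ω => (A ω, C ω, B ω)) (a, c, b)
      = pdist p (fun ω => (A ω, B ω)) (a, b) := fun a => pdist_marg₁ A C B a b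
  rw [Finset.sum_congr rfl fun a _ => h1 a]
  unfold pdist
  rw [Finset.sum_comm]
  refine Finset.sum_congr rfl fun ω _ => ?_
  by_cases hB : B ω = b <;> simp [Prod.ext_iff, hB, Finset.sum_ite_eq]

lemma pdist_marg_mid (f : Ω → α) (g : Ω → β) (W : Ω → δ) (a : α) (w : δ) :
    ∑ x, pdist p (fun ω => ((f ω, g ω), W ω)) ((a, x), w)
      = pdist p (fun ω => (f ω, W ω)) (a, w) := by
  unfold pdist
  rw [Finset.sum_comm]
  refine Finset.sum_congr rfl fun ω _ => ?_
  by_cases hf : f ω = a <;> by_cases hW : W ω = w <;>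
    simp [Prod.ext_iff, hf, hW, Finset.sum_ite_eq]

end helpers2

section helpers3
variable {α β γ δ : Type*} [Fintype α] [DecidableEq α] [Fintype β] [DecidableEq β]
  [Fintype γ] [DecidableEq γ] [Fintype δ] [DecidableEq δ]
variable {p : Ω → ℝ}

lemma mul_log_le_mul_log {x y : ℝ} (hx : 0 ≤ x) (hxy : x ≤ y) :
    x * Real.log x ≤ x * Real.log y := by
  rcases eq_or_lt_of_le hx with h | h
  · simp [← h]
  · exact mul_le_mul_of_nonneg_left (Real.log_le_log h hxy) hx

lemma ent_comp_le (hp0 : ∀ ω, 0 ≤ p ω) (f : Ω → α) (g : α → β) :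
    ent p (fun ω => g (f ω)) ≤ ent p f := by
  unfold ent
  rw [neg_le_neg_iff]
  rw [← Finset.sum_fiberwise Finset.univ g (fun a => pdist p f a * Real.log (pdist p f a))]
  refine Finset.sum_le_sum fun b _ => ?_
  have hX : pdist p (fun ω => g (f ω)) b
      = ∑ a ∈ Finset.univ.filter (fun a => g a = b), pdist p f a := by
    rw [pdist_map, Finset.sum_filter]
  rw [hX]
  calc ∑ a ∈ Finset.univ.filter (fun a => g a = b), pdist p f a * Real.log (pdist p f a)
      ≤ ∑ a ∈ Finset.univ.filter (fun a => g a = b),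
          pdist p f a * Real.log (∑ a' ∈ Finset.univ.filter (fun a' => g a' = b), pdist p f a') := by
        refine Finset.sum_le_sum fun a ha => ?_
        exact mul_log_le_mul_log (pdist_nonneg hp0 f a)
          (Finset.single_le_sum (fun a' _ => pdist_nonneg hp0 f a') ha)
    _ = (∑ a ∈ Finset.univ.filter (fun a => g a = b), pdist p f a)
        * Real.log (∑ a' ∈ Finset.univ.filter (fun a' => g a' = b), pdist p f a') := by
        rw [← Finset.sum_mul]

lemma pdist_equiv (e : α ≃ β) (f : Ω → α) (b : β) :
    pdist p (fun ω => e (f ω)) b = pdist p f (e.symm b) := by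
  unfold pdist
  refine Finset.sum_congr rfl fun ω _ => ?_
  simp [Equiv.eq_symm_apply]

lemma ent_equiv (e : α ≃ β) (f : Ω → α) : ent p (fun ω => e (f ω)) = ent p f := by
  unfold ent
  congr 1
  rw [Finset.sum_congr rfl fun b _ => by rw [pdist_equiv]]
  exact Equiv.sum_comp e.symm (fun a => pdist p f a * Real.log (pdist p f a))

end helpers3

section helpers4
variable {α β γ δ : Type*} [Fintype α] [DecidableEq α] [Fintype β] [DecidableEq β]
  [Fintype γ] [DecidableEq γ] [Fintype δ] [DecidableEq δ]
variable {p : Ω → ℝ}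

lemma sum_log_decomp (q : α → γ → β → ℝ) (Pab : α → β → ℝ) (Pcb : γ → β → ℝ) (Pb : β → ℝ)
    (hq0 : ∀ a c b, 0 ≤ q a c b) (hPab0 : ∀ a b, 0 ≤ Pab a b) (hPcb0 : ∀ c b, 0 ≤ Pcb c b)
    (hqb : ∀ a c b, q a c b ≤ Pb b)
    (h : ∀ a c b, q a c b * Pb b = Pab a b * Pcb c b)
    (m1 : ∀ a b, ∑ c, q a c b = Pab a b) (m2 : ∀ c b, ∑ a, q a c b = Pcb c b)
    (m3 : ∀ b, ∑ a, ∑ c, q a c b = Pb b) :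
    ∑ a, ∑ c, ∑ b, q a c b * Real.log (q a c b)
      = (∑ a, ∑ b, Pab a b * Real.log (Pab a b))
        + (∑ c, ∑ b, Pcb c b * Real.log (Pcb c b))
        - ∑ b, Pb b * Real.log (Pb b) := by
  have key : ∀ a c b, q a c b * Real.log (q a c b)
      = q a c b * Real.log (Pab a b) + q a c b * Real.log (Pcb c b)
        - q a c b * Real.log (Pb b) := by
    intro a c b
    by_cases hq : q a c b = 0
    · simp [hq]
    · have hq' : 0 < q a c b := lt_of_le_of_ne (hq0 a c b) (Ne.symm hq)
      have hPb' : 0 < Pb b := lt_of_lt_of_le hq' (hqb a c b)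
      have hprod : 0 < Pab a b * Pcb c b := by rw [← h a c b]; exact mul_pos hq' hPb'
      have hPab' : 0 < Pab a b := by
        rcases mul_pos_iff.mp hprod with ⟨h1, _⟩ | ⟨h1, h2⟩
        · exact h1
        · linarith [hPab0 a b]
      have hPcb' : 0 < Pcb c b := by
        rcases mul_pos_iff.mp hprod with ⟨_, h2⟩ | ⟨h1, h2⟩
        · exact h2
        · linarith [hPcb0 c b]
      have hlog : Real.log (q a c b) + Real.log (Pb b)
          = Real.log (Pab a b) + Real.log (Pcb c b) := by
        rw [← Real.log_mul hq'.ne' hPb'.ne', ← Real.log_mul hPab'.ne' hPcb'.ne', h a c b]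
      linear_combination (q a c b) * hlog
  have T1 : ∑ a, ∑ c, ∑ b, q a c b * Real.log (Pab a b)
      = ∑ a, ∑ b, Pab a b * Real.log (Pab a b) := by
    refine Finset.sum_congr rfl fun a _ => ?_
    rw [Finset.sum_comm]
    refine Finset.sum_congr rfl fun b _ => ?_
    rw [← Finset.sum_mul, m1]
  have T2 : ∑ a, ∑ c, ∑ b, q a c b * Real.log (Pcb c b)
      = ∑ c, ∑ b, Pcb c b * Real.log (Pcb c b) := by
    rw [Finset.sum_comm]
    refine Finset.sum_congr rfl fun c _ => ?_
    rw [Finset.sum_comm]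
    refine Finset.sum_congr rfl fun b _ => ?_
    rw [← Finset.sum_mul, m2]
  have T3 : ∑ a, ∑ c, ∑ b, q a c b * Real.log (Pb b)
      = ∑ b, Pb b * Real.log (Pb b) := by
    rw [Finset.sum_congr rfl fun a _ => Finset.sum_comm, Finset.sum_comm]
    refine Finset.sum_congr rfl fun b _ => ?_
    rw [Finset.sum_congr rfl fun a _ =>
      (Finset.sum_mul Finset.univ (fun c => q a c b) (Real.log (Pb b))).symm,
      ← Finset.sum_mul, m3]
  calc ∑ a, ∑ c, ∑ b, q a c b * Real.log (q a c b)
      = ∑ a, ∑ c, ∑ b, (q a c b * Real.log (Pab a b) + q a c b * Real.log (Pcb c b)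
        - q a c b * Real.log (Pb b)) := by
        exact Finset.sum_congr rfl fun a _ => Finset.sum_congr rfl fun c _ =>
          Finset.sum_congr rfl fun b _ => key a c b
    _ = (∑ a, ∑ c, ∑ b, q a c b * Real.log (Pab a b))
        + (∑ a, ∑ c, ∑ b, q a c b * Real.log (Pcb c b))
        - ∑ a, ∑ c, ∑ b, q a c b * Real.log (Pb b) := by
        simp only [Finset.sum_add_distrib, Finset.sum_sub_distrib]
    _ = _ := by rw [T1, T2, T3]

lemma ent_condIndep (hp0 : ∀ ω, 0 ≤ p ω) (A : Ω → α) (C : Ω → γ) (B : Ω → β)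
    (h : ∀ a c b, pdist p (fun ω => (A ω, C ω, B ω)) (a, c, b) * pdist p B b =
      pdist p (fun ω => (A ω, B ω)) (a, b) * pdist p (fun ω => (C ω, B ω)) (c, b)) :
    ent p (fun ω => (A ω, C ω, B ω)) + ent p B
      = ent p (fun ω => (A ω, B ω)) + ent p (fun ω => (C ω, B ω)) := by
  have main := sum_log_decomp
    (fun a c b => pdist p (fun ω => (A ω, C ω, B ω)) (a, c, b))
    (fun a b => pdist p (fun ω => (A ω, B ω)) (a, b))
    (fun c b => pdist p (fun ω => (C ω, B ω)) (c, b))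
    (fun b => pdist p B b)
    (fun a c b => pdist_nonneg hp0 _ _) (fun a b => pdist_nonneg hp0 _ _)
    (fun c b => pdist_nonneg hp0 _ _)
    (fun a c b => pdist_le_pdist hp0 _ B (a, c, b) b
      (fun ω hw => by simpa using congrArg (fun t : α × γ × β => t.2.2) hw))
    h (fun a b => pdist_marg₁ A C B a b) (fun c b => pdist_marg₂ A C B c b)
    (fun b => pdist_marg₃ A C B b)
  unfold ent
  simp only [Fintype.sum_prod_type]
  linarith [main]

end helpers4


/-- Upper bound for encoder features: for a Markov chain `Y → X → Z1 → Z2 → R`,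
`I(Y;Z1) ≤ I(Y;Z2) − I(Z1;Z2) + H(Z1)`. -/
theorem stmt_5 {𝒴 𝒳 𝒵₁ 𝒵₂ ℛ : Type*} [Fintype 𝒴] [DecidableEq 𝒴] [Fintype 𝒳] [DecidableEq 𝒳]
    [Fintype 𝒵₁] [DecidableEq 𝒵₁] [Fintype 𝒵₂] [DecidableEq 𝒵₂] [Fintype ℛ] [DecidableEq ℛ]
    (p : Ω → ℝ) (hp0 : ∀ ω, 0 ≤ p ω) (hp1 : ∑ ω, p ω = 1)
    (Y : Ω → 𝒴) (X : Ω → 𝒳) (Z1 : Ω → 𝒵₁) (Z2 : Ω → 𝒵₂) (R : Ω → ℛ)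
    (h1 : CondIndep p Y Z1 X)
    (h2 : CondIndep p (fun ω => (Y ω, X ω)) Z2 Z1)
    (h3 : CondIndep p (fun ω => (Y ω, X ω, Z1 ω)) R Z2) :
    mi p Y Z1 ≤ mi p Y Z2 - mi p Z1 Z2 + ent p Z1 := by
  -- marginalize h2 over X to get conditional independence of Y and Z2 given Z1
  have hYZ2 : CondIndep p Y Z2 Z1 := by
    intro y c b
    have hs : ∑ x, (pdist p (fun ω => ((Y ω, X ω), Z2 ω, Z1 ω)) ((y, x), c, b)
          * pdist p Z1 b)
        = ∑ x, (pdist p (fun ω => ((Y ω, X ω), Z1 ω)) ((y, x), b)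
          * pdist p (fun ω => (Z2 ω, Z1 ω)) (c, b)) :=
      Finset.sum_congr rfl fun x _ => h2 (y, x) c b
    rw [← Finset.sum_mul, ← Finset.sum_mul,
      pdist_marg_mid Y X (fun ω => (Z2 ω, Z1 ω)) y (c, b),
      pdist_marg_mid Y X Z1 y b] at hs
    exact hs
  have he : ent p (fun ω => (Y ω, Z2 ω, Z1 ω)) + ent p Z1
      = ent p (fun ω => (Y ω, Z1 ω)) + ent p (fun ω => (Z2 ω, Z1 ω)) :=
    ent_condIndep hp0 Y Z2 Z1 hYZ2
  have mono : ent p (fun ω => (Y ω, Z2 ω)) ≤ ent p (fun ω => (Y ω, Z2 ω, Z1 ω)) :=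
    ent_comp_le hp0 (fun ω => (Y ω, Z2 ω, Z1 ω)) (fun t => (t.1, t.2.1))
  have hswap : ent p (fun ω => (Z2 ω, Z1 ω)) = ent p (fun ω => (Z1 ω, Z2 ω)) :=
    ent_equiv (Equiv.prodComm 𝒵₁ 𝒵₂) (fun ω => (Z1 ω, Z2 ω))
  simp only [mi]
  linarith [he, mono, hswap]
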